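/- arXiv:2202.08162 — 4 statements merged into one kernel-verified Lean document; each statement's English description precedes it below -/
import Mathlib

section
/- Each Gaudin Hamiltonian H_r commutes with the diagonal action of gl(1|1) on the tensor product L_Λ: [H_r, X] = 0 for all X ∈ gl(1|1). -/
/-- The action of `k` commuting (in the graded sense) copies of `gl(1|1)` on a complex vector
space `W` — e.g. the tensor product `L_Λ = L_{λ⁽¹⁾} ⊗ ... ⊗ L_{λ⁽ᵏ⁾}` with `e u i j`
representing the operator `e_{i+1,j+1}^{(u+1)}` acting on the `u`-th tensor factor (with the
super sign rules baked in).  Same-site operators satisfy the `gl(1|1)` supercommutator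
relations; different-site operators supercommute (odd ones anticommute). -/
structure GaudinRep (k : ℕ) (W : Type) [AddCommGroup W] [Module ℂ W] where
  e : Fin k → Fin 2 → Fin 2 → Module.End ℂ W
  same_site : ∀ (u : Fin k) (i j l m : Fin 2),
    e u i j * e u l m -
        ((-1 : ℂ) ^ (((i : ℕ) + (j : ℕ)) * ((l : ℕ) + (m : ℕ)))) • (e u l m * e u i j) =
      (if j = l then e u i m else 0) -
        ((-1 : ℂ) ^ (((i : ℕ) + (j : ℕ)) * ((l : ℕ) + (m : ℕ)))) •
          (if i = m then e u l j else 0)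
  cross_site : ∀ (u v : Fin k), u ≠ v → ∀ (i j l m : Fin 2),
    e u i j * e v l m = ((-1 : ℂ) ^ (((i : ℕ) + (j : ℕ)) * ((l : ℕ) + (m : ℕ)))) •
      (e v l m * e u i j)

namespace GaudinRep

variable {k : ℕ} {W : Type} [AddCommGroup W] [Module ℂ W]

/-- The quadratic Gaudin Hamiltonian
`H_r = Σ_{s≠r} (e₁₁⁽ʳ⁾e₁₁⁽ˢ⁾ − e₁₂⁽ʳ⁾e₂₁⁽ˢ⁾ + e₂₁⁽ʳ⁾e₁₂⁽ˢ⁾ − e₂₂⁽ʳ⁾e₂₂⁽ˢ⁾)/(b_r − b_s)`. -/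
noncomputable def H (ρ : GaudinRep k W) (b : Fin k → ℂ) (r : Fin k) : Module.End ℂ W :=
  ∑ s ∈ Finset.univ.erase r,
    (b r - b s)⁻¹ •
      (ρ.e r 0 0 * ρ.e s 0 0 - ρ.e r 0 1 * ρ.e s 1 0 +
        ρ.e r 1 0 * ρ.e s 0 1 - ρ.e r 1 1 * ρ.e s 1 1)

end GaudinRep

/-!
Each summand of `H_r` is, up to the scalar `(b_r - b_s)⁻¹`, the split Casimir
`Ω_{rs} = Σ_{a,b} (-1)^b e_{ab}^{(r)} e_{ba}^{(s)}`. Supercommuting the diagonal operator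
`e_{ij} = Σ_t e_{ij}^{(t)}` past a single-site operator only sees that site, where it is the
`gl(1|1)` bracket. The super Leibniz rule then writes `[e_{ij}, Ω_{rs}]` in terms of these
brackets, and the resulting two-site terms cancel in pairs.
-/

/-- Leibniz rule for the `ε`-twisted commutator `[x, y]_ε = x y - ε y x`, when `ε² = 1`. -/
theorem mul_mul_sub_mul_mul_eq {S R : Type*} [Monoid S] [Ring R] [DistribMulAction S R]
    [SMulCommClass S R R] [IsScalarTower S R R] {ε : S} (hε : ε * ε = 1) {x a b c d : R}
    (ha : x * a - ε • (a * x) = c) (hb : x * b - ε • (b * x) = d) :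
    x * (a * b) - a * b * x = c * b + ε • (a * d) := by
  rw [← ha, ← hb]
  simp only [sub_mul, mul_sub, smul_sub, smul_mul_assoc, mul_smul_comm, smul_smul, hε, one_smul,
    mul_assoc]
  abel

namespace GaudinRep

variable {k : ℕ} {W : Type} [AddCommGroup W] [Module ℂ W]

def superSign (i j l m : Fin 2) : ℂ := (-1) ^ (((i : ℕ) + (j : ℕ)) * ((l : ℕ) + (m : ℕ)))

theorem superSign_mul_self (i j l m : Fin 2) : superSign i j l m * superSign i j l m = 1 := by
  rw [superSign, ← pow_add, ← two_mul, pow_mul]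
  norm_num

theorem superSign_swap (i j l m : Fin 2) : superSign i j l m = superSign i j m l := by
  rw [superSign, superSign, add_comm (l : ℕ)]

def diagonal (ρ : GaudinRep k W) (i j : Fin 2) : Module.End ℂ W := ∑ s, ρ.e s i j

theorem diagonal_mul_sub_smul_mul_diagonal (ρ : GaudinRep k W) (i j : Fin 2) (u : Fin k)
    (l m : Fin 2) :
    ρ.diagonal i j * ρ.e u l m - superSign i j l m • (ρ.e u l m * ρ.diagonal i j) =
      (if j = l then ρ.e u i m else 0) -
        superSign i j l m • (if i = m then ρ.e u l j else 0) := by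
  rw [diagonal, Finset.sum_mul, Finset.mul_sum, Finset.smul_sum, ← Finset.sum_sub_distrib,
    Finset.sum_eq_single u]
  · exact ρ.same_site u i j l m
  · intro t _ htu
    exact sub_eq_zero.mpr (ρ.cross_site t u htu i j l m)
  · simp

def casimir (ρ : GaudinRep k W) (r s : Fin k) : Module.End ℂ W :=
  ρ.e r 0 0 * ρ.e s 0 0 - ρ.e r 0 1 * ρ.e s 1 0 + ρ.e r 1 0 * ρ.e s 0 1 -
    ρ.e r 1 1 * ρ.e s 1 1

theorem diagonal_mul_mul_sub_mul_mul_diagonal (ρ : GaudinRep k W) (i j : Fin 2) (r s : Fin k)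
    (l m : Fin 2) :
    ρ.diagonal i j * (ρ.e r l m * ρ.e s m l) - ρ.e r l m * ρ.e s m l * ρ.diagonal i j =
      ((if j = l then ρ.e r i m else 0) -
            superSign i j l m • (if i = m then ρ.e r l j else 0)) * ρ.e s m l +
        superSign i j l m • (ρ.e r l m * ((if j = m then ρ.e s i l else 0) -
            superSign i j l m • (if i = l then ρ.e s m j else 0))) := by
  refine mul_mul_sub_mul_mul_eq (superSign_mul_self i j l m)
    (ρ.diagonal_mul_sub_smul_mul_diagonal i j r l m) ?_
  rw [superSign_swap]
  exact ρ.diagonal_mul_sub_smul_mul_diagonal i j s m l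

theorem commute_casimir_diagonal (ρ : GaudinRep k W) (r s : Fin k) (i j : Fin 2) :
    Commute (ρ.casimir r s) (ρ.diagonal i j) := by
  set X := ρ.diagonal i j
  have expand : X * ρ.casimir r s - ρ.casimir r s * X =
      (X * (ρ.e r 0 0 * ρ.e s 0 0) - ρ.e r 0 0 * ρ.e s 0 0 * X) -
        (X * (ρ.e r 0 1 * ρ.e s 1 0) - ρ.e r 0 1 * ρ.e s 1 0 * X) +
        (X * (ρ.e r 1 0 * ρ.e s 0 1) - ρ.e r 1 0 * ρ.e s 0 1 * X) -
        (X * (ρ.e r 1 1 * ρ.e s 1 1) - ρ.e r 1 1 * ρ.e s 1 1 * X) := by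
    simp only [casimir, mul_sub, mul_add, sub_mul, add_mul]
    abel
  refine (sub_eq_zero.mp ?_).symm
  rw [expand, ρ.diagonal_mul_mul_sub_mul_mul_diagonal, ρ.diagonal_mul_mul_sub_mul_mul_diagonal,
    ρ.diagonal_mul_mul_sub_mul_mul_diagonal, ρ.diagonal_mul_mul_sub_mul_mul_diagonal]
  fin_cases i <;> fin_cases j <;>
    norm_num [superSign, mul_add, add_mul, mul_sub, sub_mul] <;> abel

end GaudinRep

theorem gaudin_hamiltonians_commute_with_gl11_general
    (k : ℕ) (W : Type) [AddCommGroup W] [Module ℂ W]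
    (ρ : GaudinRep k W) (b : Fin k → ℂ) (r : Fin k)
    (i j : Fin 2) :
    ρ.H b r * (∑ s, ρ.e s i j) = (∑ s, ρ.e s i j) * ρ.H b r :=
  Commute.sum_left _ _ _ fun s _ => (ρ.commute_casimir_diagonal r s i j).smul_left _

/-- Each Gaudin Hamiltonian `H_r` commutes with the diagonal action of
`gl(1|1)` on the tensor product: `[H_r, X] = 0` for every `X ∈ gl(1|1)`, the diagonal
action of the basis element `e_{ij}` being `Σ_s e_{ij}^{(s)}`. -/
theorem gaudin_hamiltonians_commute_with_gl11
    (k : ℕ) (W : Type) [AddCommGroup W] [Module ℂ W]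
    (ρ : GaudinRep k W) (b : Fin k → ℂ) (hb : Function.Injective b) (r : Fin k)
    (i j : Fin 2) :
    ρ.H b r * (∑ s, ρ.e s i j) = (∑ s, ρ.e s i j) * ρ.H b r :=
  gaudin_hamiltonians_commute_with_gl11_general k W ρ b r i j
end

section
/- The Weyl module W_η of U(gl(1|1)[t]) associated to a monic polynomial η of degree m has dimension at most 2^m. -/
set_option synthInstance.maxHeartbeats 1000000
set_option maxHeartbeats 1000000

/-- A representation of the current superalgebra `gl(1|1)[t]` on a complex vector space:
operators `E i j r` (representing `e_{i+1,j+1}[r] = e_{i+1,j+1} ⊗ tʳ`) satisfying the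
supercommutator relations
`[e_{ij}[r], e_{kl}[s]] = δ_{jk} e_{il}[r+s] − (−1)^{(|i|+|j|)(|k|+|l|)} δ_{il} e_{kj}[r+s]`
(anticommutator when both elements are odd). -/
structure CurrentRep (W : Type) [AddCommGroup W] [Module ℂ W] where
  E : Fin 2 → Fin 2 → ℕ → Module.End ℂ W
  rel : ∀ (i j k l : Fin 2) (r s : ℕ),
    E i j r * E k l s -
        ((-1 : ℂ) ^ (((i : ℕ) + (j : ℕ)) * ((k : ℕ) + (l : ℕ)))) • (E k l s * E i j r) =
      (if j = k then E i l (r + s) else 0) -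
        ((-1 : ℂ) ^ (((i : ℕ) + (j : ℕ)) * ((k : ℕ) + (l : ℕ)))) •
          (if i = l then E k j (r + s) else 0)

/-- `w` generates `W` as a `gl(1|1)[t]`-module. -/
def CurrentRep.IsCyclic {W : Type} [AddCommGroup W] [Module ℂ W]
    (ρ : CurrentRep W) (w : W) : Prop :=
  ∀ P : Submodule ℂ W, (∀ (i j : Fin 2) (r : ℕ) (x : W), x ∈ P → ρ.E i j r x ∈ P) →
    w ∈ P → P = ⊤

/-! The odd currents `e₂₁[r]` anticommute and square to zero. Commuting `e₁₁[t]`, `e₂₂[t]` and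
`e₁₂[t]` past them shows that `W` is spanned by the vectors `e₂₁[r₁] ⋯ e₂₁[rₖ] w`. Applying
`e₁₁[t]` to `Σ γᵢ e₂₁[i] w = 0` shifts it to `Σ γᵢ e₂₁[t + i] w = 0`, and this relation passes
through every such product up to sign. As `γ_m = 1`, it rewrites any `e₂₁[r]` with `r ≥ m` in terms
of smaller indices, so the products with distinct indices `r₁ < ⋯ < rₖ < m`, of which there are
`2^m`, already span `W`. -/

namespace CurrentRep

variable {W : Type} [AddCommGroup W] [Module ℂ W] (ρ : CurrentRep W)

theorem E10_mul_E10_anticomm (r s : ℕ) :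
    ρ.E 1 0 r * ρ.E 1 0 s = -(ρ.E 1 0 s * ρ.E 1 0 r) :=
  eq_neg_of_add_eq_zero_left (by simpa using ρ.rel 1 0 1 0 r s)

theorem E10_mul_self (r : ℕ) : ρ.E 1 0 r * ρ.E 1 0 r = 0 := by
  have h : (2 : ℂ) • (ρ.E 1 0 r * ρ.E 1 0 r) = 0 := by
    rw [two_smul]
    nth_rw 1 [ρ.E10_mul_E10_anticomm r r]
    exact neg_add_cancel _
  exact (smul_eq_zero.mp h).resolve_left two_ne_zero

theorem E00_E10_apply (r s : ℕ) (x : W) :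
    ρ.E 0 0 r (ρ.E 1 0 s x) = ρ.E 1 0 s (ρ.E 0 0 r x) - ρ.E 1 0 (r + s) x := by
  rw [sub_eq_add_neg, ← sub_eq_iff_eq_add']
  simpa using congr($(ρ.rel 0 0 1 0 r s) x)

theorem E11_E10_apply (r s : ℕ) (x : W) :
    ρ.E 1 1 r (ρ.E 1 0 s x) = ρ.E 1 0 s (ρ.E 1 1 r x) + ρ.E 1 0 (r + s) x := by
  rw [← sub_eq_iff_eq_add']
  simpa using congr($(ρ.rel 1 1 1 0 r s) x)

theorem E01_E10_apply (r s : ℕ) (x : W) :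
    ρ.E 0 1 r (ρ.E 1 0 s x) =
      ρ.E 0 0 (r + s) x + ρ.E 1 1 (r + s) x - ρ.E 1 0 s (ρ.E 0 1 r x) := by
  rw [eq_sub_iff_add_eq]
  simpa using congr($(ρ.rel 0 1 1 0 r s) x)

def lowerProd (l : List ℕ) : Module.End ℂ W := (l.map (ρ.E 1 0)).prod

@[simp]
theorem lowerProd_nil : ρ.lowerProd [] = 1 := rfl

@[simp]
theorem lowerProd_cons (a : ℕ) (l : List ℕ) :
    ρ.lowerProd (a :: l) = ρ.E 1 0 a * ρ.lowerProd l := List.prod_cons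

theorem lowerProd_cons_eq_zero_of_mem {a : ℕ} {l : List ℕ} (ha : a ∈ l) :
    ρ.lowerProd (a :: l) = 0 := by
  induction l with
  | nil => simp at ha
  | cons b l ih =>
    rcases List.mem_cons.mp ha with rfl | ha
    · rw [lowerProd_cons, lowerProd_cons, ← mul_assoc, E10_mul_self, zero_mul]
    · have hswap : ρ.lowerProd (a :: b :: l) = -(ρ.E 1 0 b * ρ.lowerProd (a :: l)) := by
        simp only [lowerProd_cons]
        rw [← mul_assoc, E10_mul_E10_anticomm, neg_mul, mul_assoc]
      rw [hswap, ih ha, mul_zero, neg_zero]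

theorem lowerProd_perm {l₁ l₂ : List ℕ} (h : l₁.Perm l₂) :
    ∃ n : ℕ, ρ.lowerProd l₁ = (-1 : ℂ) ^ n • ρ.lowerProd l₂ := by
  induction h with
  | nil => exact ⟨0, by simp⟩
  | cons a _ ih =>
    obtain ⟨n, hn⟩ := ih
    exact ⟨n, by rw [lowerProd_cons, hn, lowerProd_cons, mul_smul_comm]⟩
  | swap a b l =>
    refine ⟨1, ?_⟩
    simp only [lowerProd_cons]
    rw [← mul_assoc, ← mul_assoc, E10_mul_E10_anticomm ρ b a]
    simp
  | trans _ _ ih₁ ih₂ =>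
    obtain ⟨n₁, hn₁⟩ := ih₁
    obtain ⟨n₂, hn₂⟩ := ih₂
    exact ⟨n₁ + n₂, by rw [hn₁, hn₂, smul_smul, pow_add]⟩

theorem E10_mul_lowerProd (a : ℕ) (l : List ℕ) :
    ρ.E 1 0 a * ρ.lowerProd l = (-1 : ℂ) ^ l.length • (ρ.lowerProd l * ρ.E 1 0 a) := by
  induction l with
  | nil => simp
  | cons b l ih =>
    rw [lowerProd_cons, ← mul_assoc, E10_mul_E10_anticomm, neg_mul, mul_assoc, ih,
      mul_smul_comm, List.length_cons, pow_succ, mul_neg_one, neg_smul, mul_assoc]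

def lowerSpan (w : W) : Submodule ℂ W :=
  Submodule.span ℂ (Set.range fun l => ρ.lowerProd l w)

theorem lowerProd_apply_mem_lowerSpan (l : List ℕ) (w : W) :
    ρ.lowerProd l w ∈ ρ.lowerSpan w :=
  Submodule.subset_span ⟨l, rfl⟩

theorem apply_mem_lowerSpan {w : W} {f : Module.End ℂ W}
    (hf : ∀ l, f (ρ.lowerProd l w) ∈ ρ.lowerSpan w) {x : W} (hx : x ∈ ρ.lowerSpan w) :
    f x ∈ ρ.lowerSpan w :=
  (Submodule.span_le (p := (ρ.lowerSpan w).comap f)).mpr (by rintro _ ⟨l, rfl⟩; exact hf l) hx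

theorem E10_apply_mem_lowerSpan (r : ℕ) {w x : W} (hx : x ∈ ρ.lowerSpan w) :
    ρ.E 1 0 r x ∈ ρ.lowerSpan w :=
  ρ.apply_mem_lowerSpan (fun l => ρ.lowerProd_apply_mem_lowerSpan (r :: l) w) hx

section HighestWeight

variable {ρ} {w : W} {c d : ℕ → ℂ}

theorem E00_apply_lowerProd_mem (h00 : ∀ r, ρ.E 0 0 r w = c r • w) (t : ℕ) (l : List ℕ) :
    ρ.E 0 0 t (ρ.lowerProd l w) ∈ ρ.lowerSpan w := by
  induction l with
  | nil =>
    simpa [h00] using (ρ.lowerSpan w).smul_mem (c t) (ρ.lowerProd_apply_mem_lowerSpan [] w)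
  | cons a l ih =>
    rw [lowerProd_cons, Module.End.mul_apply, E00_E10_apply]
    exact sub_mem (ρ.E10_apply_mem_lowerSpan a ih)
      (ρ.E10_apply_mem_lowerSpan _ (ρ.lowerProd_apply_mem_lowerSpan l w))

theorem E11_apply_lowerProd_mem (h11 : ∀ r, ρ.E 1 1 r w = d r • w) (t : ℕ) (l : List ℕ) :
    ρ.E 1 1 t (ρ.lowerProd l w) ∈ ρ.lowerSpan w := by
  induction l with
  | nil =>
    simpa [h11] using (ρ.lowerSpan w).smul_mem (d t) (ρ.lowerProd_apply_mem_lowerSpan [] w)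
  | cons a l ih =>
    rw [lowerProd_cons, Module.End.mul_apply, E11_E10_apply]
    exact add_mem (ρ.E10_apply_mem_lowerSpan a ih)
      (ρ.E10_apply_mem_lowerSpan _ (ρ.lowerProd_apply_mem_lowerSpan l w))

theorem E01_apply_lowerProd_mem (h00 : ∀ r, ρ.E 0 0 r w = c r • w)
    (h11 : ∀ r, ρ.E 1 1 r w = d r • w) (h01 : ∀ r, ρ.E 0 1 r w = 0) (t : ℕ) (l : List ℕ) :
    ρ.E 0 1 t (ρ.lowerProd l w) ∈ ρ.lowerSpan w := by
  induction l with
  | nil => simp [h01]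
  | cons a l ih =>
    rw [lowerProd_cons, Module.End.mul_apply, E01_E10_apply]
    exact sub_mem (add_mem (E00_apply_lowerProd_mem h00 _ l) (E11_apply_lowerProd_mem h11 _ l))
      (ρ.E10_apply_mem_lowerSpan a ih)

theorem lowerSpan_eq_top (h00 : ∀ r, ρ.E 0 0 r w = c r • w)
    (h11 : ∀ r, ρ.E 1 1 r w = d r • w) (h01 : ∀ r, ρ.E 0 1 r w = 0) (hcyc : ρ.IsCyclic w) :
    ρ.lowerSpan w = ⊤ := by
  refine hcyc _ (fun i j r x hx => ρ.apply_mem_lowerSpan (fun l => ?_) hx)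
    (ρ.lowerProd_apply_mem_lowerSpan [] w)
  fin_cases i <;> fin_cases j
  · exact E00_apply_lowerProd_mem h00 r l
  · exact E01_apply_lowerProd_mem h00 h11 h01 r l
  · exact ρ.lowerProd_apply_mem_lowerSpan (r :: l) w
  · exact E11_apply_lowerProd_mem h11 r l

theorem sum_smul_E10_shift_apply_eq_zero (h00 : ∀ r, ρ.E 0 0 r w = c r • w) {γ : ℕ → ℂ}
    {s : Finset ℕ} (hγ : ∑ i ∈ s, γ i • ρ.E 1 0 i w = 0) (t : ℕ) :
    ∑ i ∈ s, γ i • ρ.E 1 0 (t + i) w = 0 := by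
  have h := congr_arg (ρ.E 0 0 t) hγ
  simp only [map_sum, map_smul, E00_E10_apply, h00, smul_sub, Finset.sum_sub_distrib] at h
  simpa only [smul_comm (γ _) (c t), ← Finset.smul_sum, hγ, smul_zero, zero_sub, neg_eq_zero,
    map_zero] using h

theorem sum_smul_E10_shift_apply_lowerProd_eq_zero {γ : ℕ → ℂ} {s : Finset ℕ}
    (hγ : ∀ t, ∑ i ∈ s, γ i • ρ.E 1 0 (t + i) w = 0) (t : ℕ) (l : List ℕ) :
    ∑ i ∈ s, γ i • ρ.E 1 0 (t + i) (ρ.lowerProd l w) = 0 := by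
  have hpast : ∀ r, ρ.E 1 0 r (ρ.lowerProd l w) =
      (-1 : ℂ) ^ l.length • ρ.lowerProd l (ρ.E 1 0 r w) := fun r =>
    congr($(ρ.E10_mul_lowerProd r l) w)
  calc ∑ i ∈ s, γ i • ρ.E 1 0 (t + i) (ρ.lowerProd l w)
      = (-1 : ℂ) ^ l.length • ρ.lowerProd l (∑ i ∈ s, γ i • ρ.E 1 0 (t + i) w) := by
        simp only [hpast, map_sum, map_smul, Finset.smul_sum, smul_comm (γ _)]
    _ = 0 := by rw [hγ, map_zero, smul_zero]

end HighestWeight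

def lowerMonomial (s : Finset ℕ) : Module.End ℂ W := ρ.lowerProd (s.sort (· ≤ ·))

theorem E10_mul_lowerMonomial_of_mem {r : ℕ} {s : Finset ℕ} (hr : r ∈ s) :
    ρ.E 1 0 r * ρ.lowerMonomial s = 0 := by
  rw [lowerMonomial, ← lowerProd_cons]
  exact ρ.lowerProd_cons_eq_zero_of_mem ((Finset.mem_sort _).mpr hr)

theorem E10_mul_lowerMonomial_of_notMem {r : ℕ} {s : Finset ℕ} (hr : r ∉ s) :
    ∃ n : ℕ, ρ.E 1 0 r * ρ.lowerMonomial s = (-1 : ℂ) ^ n • ρ.lowerMonomial (insert r s) := by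
  rw [lowerMonomial, ← lowerProd_cons]
  apply lowerProd_perm
  exact ((Finset.sort_perm_toList _ _).cons r).trans
    ((Finset.toList_insert hr).symm.trans (Finset.sort_perm_toList _ _).symm)

def truncatedSpan (m : ℕ) (w : W) : Submodule ℂ W :=
  Submodule.span ℂ ((fun s => ρ.lowerMonomial s w) '' ↑(Finset.range m).powerset)

theorem rank_truncatedSpan_le (m : ℕ) (w : W) : Module.rank ℂ (ρ.truncatedSpan m w) ≤ 2 ^ m :=
  calc Module.rank ℂ (ρ.truncatedSpan m w)
      ≤ Cardinal.mk ((Finset.range m).powerset : Set (Finset ℕ)) :=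
        (rank_span_le _).trans Cardinal.mk_image_le
    _ = 2 ^ m := Cardinal.mk_coe_finset.trans (by simp)

variable {ρ}

theorem E10_apply_lowerMonomial_mem {m : ℕ} {w : W} {γ : ℕ → ℂ} (hmonic : γ m = 1)
    (hrel : ∀ t l, ∑ i ∈ Finset.range (m + 1), γ i • ρ.E 1 0 (t + i) (ρ.lowerProd l w) = 0)
    (r : ℕ) {s : Finset ℕ} (hs : s ⊆ Finset.range m) :
    ρ.E 1 0 r (ρ.lowerMonomial s w) ∈ ρ.truncatedSpan m w := by
  induction r using Nat.strong_induction_on with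
  | _ r ih =>
  by_cases hrm : r < m
  · by_cases hr : r ∈ s
    · rw [← Module.End.mul_apply, E10_mul_lowerMonomial_of_mem ρ hr]
      exact zero_mem _
    · obtain ⟨n, hn⟩ := ρ.E10_mul_lowerMonomial_of_notMem hr
      rw [← Module.End.mul_apply, hn]
      refine Submodule.smul_mem _ _ (Submodule.subset_span ⟨_, ?_, rfl⟩)
      exact Finset.mem_coe.mpr (Finset.mem_powerset.mpr
        (Finset.insert_subset (Finset.mem_range.mpr hrm) hs))
  · -- as `γ m = 1`, the relation at `t = r - m` expresses `e₂₁[r]` through the `e₂₁[r - m + i]`, `i < m`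
    have h := hrel (r - m) (s.sort (· ≤ ·))
    rw [Finset.sum_range_succ, hmonic, one_smul, Nat.sub_add_cancel (not_lt.mp hrm)] at h
    rw [lowerMonomial, eq_neg_of_add_eq_zero_right h]
    refine neg_mem (Submodule.sum_mem _ fun i hi => Submodule.smul_mem _ _ (ih _ ?_))
    have := Finset.mem_range.mp hi
    omega

theorem lowerSpan_le_truncatedSpan {m : ℕ} {w : W} {γ : ℕ → ℂ} (hmonic : γ m = 1)
    (hrel : ∀ t l, ∑ i ∈ Finset.range (m + 1), γ i • ρ.E 1 0 (t + i) (ρ.lowerProd l w) = 0) :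
    ρ.lowerSpan w ≤ ρ.truncatedSpan m w := by
  have hE10 : ∀ r x, x ∈ ρ.truncatedSpan m w → ρ.E 1 0 r x ∈ ρ.truncatedSpan m w :=
    fun r x hx => (Submodule.span_le (p := (ρ.truncatedSpan m w).comap (ρ.E 1 0 r))).mpr
      (by
        rintro _ ⟨s, hs, rfl⟩
        exact E10_apply_lowerMonomial_mem hmonic hrel r (Finset.mem_powerset.mp hs)) hx
  refine Submodule.span_le.mpr (Set.range_subset_iff.mpr fun l => ?_)
  induction l with
  | nil => exact Submodule.subset_span ⟨∅, by simp, by simp [lowerMonomial]⟩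
  | cons a l ih =>
    rw [lowerProd_cons, Module.End.mul_apply]
    exact hE10 a _ ih

end CurrentRep

theorem weyl_module_dim_le_general
    (m : ℕ) (γ : ℕ → ℂ) (hmonic : γ m = 1)
    (c : ℕ → ℂ)
    (W : Type) [AddCommGroup W] [Module ℂ W] (ρ : CurrentRep W) (w : W)
    (h11 : ∀ r : ℕ, ρ.E 0 0 r w = c r • w)
    (h22 : ∀ r : ℕ, ρ.E 1 1 r w = 0)
    (h12 : ∀ r : ℕ, ρ.E 0 1 r w = 0)
    (h21 : ∑ i ∈ Finset.range (m + 1), γ i • ρ.E 1 0 i w = 0)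
    (hcyc : ρ.IsCyclic w) :
    Module.rank ℂ W ≤ 2 ^ m := by
  have hrel := CurrentRep.sum_smul_E10_shift_apply_lowerProd_eq_zero
    (CurrentRep.sum_smul_E10_shift_apply_eq_zero h11 h21)
  have htop : ρ.lowerSpan w = ⊤ :=
    CurrentRep.lowerSpan_eq_top h11 (d := 0) (by simpa using h22) h12 hcyc
  calc Module.rank ℂ W = Module.rank ℂ (⊤ : Submodule ℂ W) := (rank_top ℂ W).symm
    _ ≤ Module.rank ℂ (ρ.truncatedSpan m w) :=
      Submodule.rank_mono (htop ▸ CurrentRep.lowerSpan_le_truncatedSpan hmonic hrel)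
    _ ≤ 2 ^ m := ρ.rank_truncatedSpan_le m w

/-- Let `η(x) = Σ_{i=0}^m γ_i xⁱ` be monic of degree `m` and let
`c : ℕ → ℂ` be the coefficient sequence of `η'(x)/η(x) = Σ_r c_r x^{−r−1}` (characterized by
`η · (Σ_r c_r x^{−r−1}) = η'`).  Then any `gl(1|1)[t]`-module `W` generated by an (even)
vector `w` with `e₁₁(x)w = (η'/η)w`, `e₂₂(x)w = e₁₂(x)w = 0` and `Σ_i γ_i e₂₁[i] w = 0` —
in particular the Weyl module `W_η` — has dimension at most `2^m`. -/
theorem weyl_module_dim_le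
    (m : ℕ) (γ : ℕ → ℂ) (hmonic : γ m = 1) (htop : ∀ i, m < i → γ i = 0)
    (c : ℕ → ℂ)
    (hc1 : ∀ j : ℕ, (∑ i ∈ Finset.range (m + 1),
        γ i * (if j + 1 ≤ i then c (i - j - 1) else 0)) = (j + 1 : ℂ) * γ (j + 1))
    (hc2 : ∀ j : ℕ, (∑ i ∈ Finset.range (m + 1), γ i * c (i + j)) = 0)
    (W : Type) [AddCommGroup W] [Module ℂ W] (ρ : CurrentRep W) (w : W)
    (h11 : ∀ r : ℕ, ρ.E 0 0 r w = c r • w)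
    (h22 : ∀ r : ℕ, ρ.E 1 1 r w = 0)
    (h12 : ∀ r : ℕ, ρ.E 0 1 r w = 0)
    (h21 : ∑ i ∈ Finset.range (m + 1), γ i • ρ.E 1 0 i w = 0)
    (hcyc : ρ.IsCyclic w) :
    Module.rank ℂ W ≤ 2 ^ m :=
  weyl_module_dim_le_general m γ hmonic c W ρ w h11 h22 h12 h21 hcyc
end

section
/- Let A be a finite-dimensional commutative Frobenius algebra over C and M its regular representation. Then every eigenspace of A acting on M (the common eigenspace for a character E: A → C) has dimension one. -/
/-!
The Frobenius form identifies `A` with its dual, and the character `E` corresponds to an element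
`m` with `B m x = E x`. Invariance and commutativity make `m` an eigenvector for `E`. Conversely,
on any eigenvector `x` the form satisfies `B a x = B 1 (a * x) = E a * B 1 x`, so `x` is determined
by the single number `B 1 x`; hence the eigenspace is exactly one-dimensional.
-/

/-- The eigenspace of a commutative algebra `A` acting on its regular representation,
associated to a character `E : A → ℂ`: the common eigenspace `∩_{a∈A} ker(a − E(a))`. -/
def regularEigenspace (A : Type) [CommRing A] [Algebra ℂ A] (E : A →ₐ[ℂ] ℂ) :
    Submodule ℂ A where
  carrier := {m | ∀ a : A, a * m = E a • m}
  zero_mem' := by intro a; simp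
  add_mem' := by intro x y hx hy a; simp [mul_add, hx a, hy a, smul_add]
  smul_mem' := by
    intro c x hx a
    simp only [Algebra.mul_smul_comm, hx a, Set.mem_setOf_eq]
    rw [smul_comm]

section FrobeniusForm

variable {K A : Type*} [Field K] [CommRing A] [Algebra K A]
  {B : LinearMap.BilinForm K A} (E : A →ₐ[K] K)

theorem apply_eq_map_mul_apply_one (hinv : ∀ a b c : A, B (a * b) c = B a (b * c))
    {x : A} (hx : ∀ a : A, a * x = E a • x) (a : A) :
    B a x = E a * B 1 x := by
  rw [← one_mul a, hinv, one_mul, hx, map_smul, smul_eq_mul]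

theorem eq_zero_of_apply_one_eq_zero (hinv : ∀ a b c : A, B (a * b) c = B a (b * c))
    (hsep : B.SeparatingRight) {x : A}
    (hx : ∀ a : A, a * x = E a • x) (h : B 1 x = 0) : x = 0 :=
  hsep x fun a => by rw [apply_eq_map_mul_apply_one E hinv hx, h, mul_zero]

theorem mul_toDual_symm_eq_smul [FiniteDimensional K A]
    (hinv : ∀ a b c : A, B (a * b) c = B a (b * c)) (hnd : B.Nondegenerate) (a : A) :
    a * (B.toDual hnd).symm E.toLinearMap = E a • (B.toDual hnd).symm E.toLinearMap := by
  refine sub_eq_zero.1 <| hnd.1 _ fun x => ?_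
  rw [LinearMap.map_sub₂, LinearMap.map_smul₂, mul_comm, hinv,
    LinearMap.BilinForm.apply_toDual_symm_apply, LinearMap.BilinForm.apply_toDual_symm_apply]
  simp

end FrobeniusForm

theorem frobenius_regular_eigenspace_dim_one_general
    (A : Type) [CommRing A] [Algebra ℂ A] [FiniteDimensional ℂ A]
    (B : LinearMap.BilinForm ℂ A)
    (hinv : ∀ a b c : A, B (a * b) c = B a (b * c))
    (hnd : B.Nondegenerate)
    (E : A →ₐ[ℂ] ℂ) :
    Module.finrank ℂ (regularEigenspace A E) = 1 := by
  set m := (B.toDual hnd).symm E.toLinearMap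
  have hm : m ∈ regularEigenspace A E := mul_toDual_symm_eq_smul E hinv hnd
  have hm0 : m ≠ 0 := fun h => by
    have hm1 : B m 1 = E 1 := LinearMap.BilinForm.apply_toDual_symm_apply _ _
    simp [h] at hm1
  have hinj : Function.Injective ((B 1).comp (regularEigenspace A E).subtype) :=
    (injective_iff_map_eq_zero _).2 fun x hx =>
      Subtype.ext (eq_zero_of_apply_one_eq_zero E hinv hnd.2 x.2 hx)
  apply le_antisymm
  · simpa using LinearMap.finrank_le_finrank_of_injective hinj
  · exact Module.finrank_pos_iff_exists_ne_zero.2 ⟨⟨m, hm⟩, by simpa using hm0⟩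

/-- Let `A` be a finite-dimensional commutative Frobenius algebra over `ℂ`
(i.e. one carrying a nondegenerate symmetric invariant bilinear form) and `M = A` its regular
representation.  Then for every character `E : A → ℂ`, the common eigenspace of `A` on `M`
associated to `E` has dimension one. -/
theorem frobenius_regular_eigenspace_dim_one
    (A : Type) [CommRing A] [Algebra ℂ A] [FiniteDimensional ℂ A]
    (B : LinearMap.BilinForm ℂ A)
    (hsymm : ∀ a b : A, B a b = B b a)
    (hinv : ∀ a b c : A, B (a * b) c = B a (b * c))
    (hnd : B.Nondegenerate)
    (E : A →ₐ[ℂ] ℂ) :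
    Module.finrank ℂ (regularEigenspace A E) = 1 :=
  frobenius_regular_eigenspace_dim_one_general A B hinv hnd E
end

section
/- Writing nf(x)g(x) = n x^{n−1} + Σ_{i=1}^{n−1} (−1)^i (n−i) Σ_i x^{n−1−i} where f(x) = x^l + Σ f_i x^{l−i} and g(x) = x^{n−l−1} + Σ g_j x^{n−l−1−j} are generic monic polynomials with indeterminate coefficients, the elements Σ_1, ..., Σ_{n−1}, Σ_n are algebraically independent in the polynomial ring O_l = C[f_1,...,f_l, g_1,...,g_{n−l−1}, Σ_n]; equivalently the map C[z_1,...,z_n]^{S_n} → O_l sending σ_i(z) ↦ Σ_i is injective. -/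
/-!
Specialize `f ↦ ∏_{j ≤ l} (x + z_j)`, `g ↦ ∏_{l < j < n} (x + z_j)` and `Σ_n ↦ w`, with fresh
variables `z_1, …, z_{n-1}, w`. Then `f g ↦ ∏_{j < n} (x + z_j)`, so by Vieta's formulas each
`Σ_i` with `i < n` goes to a nonzero multiple of the elementary symmetric polynomial
`e_i(z_1, …, z_{n-1})`. By the fundamental theorem of symmetric polynomials these are
algebraically independent, and so they remain after adjoining `w`; algebraic independence
pulls back along the specialization.
-/

set_option maxHeartbeats 1000000

namespace GaudinOl

/- The algebra `O_l = ℂ[f₁,...,f_l, g₁,...,g_{n−l−1}, Σ_n]` is modelled as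
`MvPolynomial (Fin n) ℂ`, the variable with index `i < l` being `f_{i+1}`, the variable
with index `l ≤ i < n−1` being `g_{i−l+1}`, and the last variable being `Σ_n`. -/

/-- The generic monic polynomial `f(x) = x^l + Σ_{i=1}^l f_i x^{l−i}`. -/
noncomputable def fPoly (n l : ℕ) : Polynomial (MvPolynomial (Fin n) ℂ) :=
  Polynomial.X ^ l +
    ∑ i : Fin n, if (i : ℕ) < l then
      Polynomial.C (MvPolynomial.X i) * Polynomial.X ^ (l - 1 - (i : ℕ)) else 0

/-- The generic monic polynomial `g(x) = x^{n−l−1} + Σ_{j=1}^{n−l−1} g_j x^{n−l−1−j}`. -/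
noncomputable def gPoly (n l : ℕ) : Polynomial (MvPolynomial (Fin n) ℂ) :=
  Polynomial.X ^ (n - l - 1) +
    ∑ i : Fin n, if l ≤ (i : ℕ) ∧ (i : ℕ) < n - 1 then
      Polynomial.C (MvPolynomial.X i) * Polynomial.X ^ (n - l - 2 - ((i : ℕ) - l)) else 0

/-- The elements `Σ₁, ..., Σ_{n−1}, Σ_n` of `O_l`, with `Σ₁,...,Σ_{n−1}` defined by the
expansion `n f(x) g(x) = n x^{n−1} + Σ_{i=1}^{n−1} (−1)^i (n−i) Σ_i x^{n−1−i}` and `Σ_n` the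
extra variable.  Here `SigmaElt n l i` is `Σ_{i+1}`. -/
noncomputable def SigmaElt (n l : ℕ) (i : Fin n) : MvPolynomial (Fin n) ℂ :=
  if (i : ℕ) + 1 = n then MvPolynomial.X i
  else ((-1 : ℂ) ^ ((i : ℕ) + 1) * ((n : ℂ) - ((i : ℕ) + 1))⁻¹) •
    (((n : ℂ) • (fPoly n l * gPoly n l)).coeff (n - 1 - ((i : ℕ) + 1)))

end GaudinOl

open Finset

theorem Fin.sum_ite_window_eq_sum_range {M : Type*} [AddCommMonoid M] {n a d : ℕ}
    (h : a + d ≤ n) (c : ℕ → M) :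
    ∑ i : Fin n, (if a ≤ (i : ℕ) ∧ (i : ℕ) < a + d then c (d - 1 - (i - a)) else 0) =
      ∑ k ∈ range d, c k := by
  rw [Fin.sum_univ_eq_sum_range (fun i => if a ≤ i ∧ i < a + d then c (d - 1 - (i - a)) else 0),
    ← sum_filter]
  have hwindow : (range n).filter (fun i => a ≤ i ∧ i < a + d) = Ico a (a + d) := by
    ext i
    simp only [mem_filter, mem_range, mem_Ico]
    omega
  rw [hwindow, sum_Ico_eq_sum_range]
  simp only [Nat.add_sub_cancel_left]
  exact sum_range_reflect c d

open Polynomial in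
theorem Polynomial.natDegree_prod_X_add_C {R ι : Type*} [CommSemiring R] [Nontrivial R]
    (s : Finset ι) (z : ι → R) : (∏ i ∈ s, (X + C (z i))).natDegree = #s := by
  rw [natDegree_prod_of_monic _ _ fun i _ => monic_X_add_C (z i)]
  simp

theorem MvPolynomial.coeff_prod_X_add_C_rename {R σ τ : Type*} [CommSemiring R] [Fintype σ]
    (f : σ → τ) {k : ℕ} (hk : k ≤ Fintype.card σ) :
    (∏ i : σ, (Polynomial.X + Polynomial.C (X (f i) : MvPolynomial τ R))).coeff k =
      rename f (esymm σ R (Fintype.card σ - k)) := by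
  rw [← prod_X_add_C_coeff R σ k hk, ← AlgHom.coe_toRingHom, ← Polynomial.coeff_map,
    Polynomial.map_prod]
  simp

theorem AlgebraicIndependent.smul_of_isUnit {ι R A : Type*} [CommRing R] [CommRing A]
    [Algebra R A] {x : ι → A} (hx : AlgebraicIndependent R x) {c : ι → R}
    (hc : ∀ i, IsUnit (c i)) : AlgebraicIndependent R (c • x) := by
  have hX : AlgebraicIndependent R fun i => c i • (MvPolynomial.X i : MvPolynomial ι R) := by
    refine .of_comp (MvPolynomial.aeval fun i =>
      (↑(hc i).unit⁻¹ : R) • (MvPolynomial.X i : MvPolynomial ι R)) ?_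
    convert MvPolynomial.algebraicIndependent_X ι R using 1
    funext i
    simp [smul_smul]
  convert hX.map' (f := MvPolynomial.aeval x) hx using 1
  funext i
  simp

theorem MvPolynomial.algebraicIndependent_esymm (R : Type*) [CommRing R] (m : ℕ) :
    AlgebraicIndependent R fun j : Fin m => esymm (Fin m) R (j + 1) := by
  rw [algebraicIndependent_iff_injective_aeval]
  intro p q hpq
  apply esymmAlgHom_fin_injective R le_rfl
  ext1
  simpa only [esymmAlgHom_apply] using hpq

open MvPolynomial in
theorem AlgebraicIndependent.option_elim_X_rename_some {ι σ R : Type*} [CommRing R]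
    {x : ι → MvPolynomial σ R} (hx : AlgebraicIndependent R x) :
    AlgebraicIndependent R fun o : Option ι => o.elim (X none) (rename some ∘ x) := by
  classical
  refine ((hx.map' (rename_injective _ (Option.some_injective σ))).option_iff_transcendental
    _).2 ?_
  refine (transcendental_supported_X (R := R) (s := Set.range some)
    (by simp)).of_tower_top_of_subalgebra_le ?_
  rw [Algebra.adjoin_le_iff]
  rintro _ ⟨j, rfl⟩
  rw [SetLike.mem_coe, mem_supported]
  refine (coe_subset.2 (vars_rename _ _)).trans ?_
  simp

theorem isUnit_neg_one_pow_mul_inv_mul {K : Type*} [Field K] [CharZero K] {n k : ℕ}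
    (hk : k + 1 < n) : IsUnit ((-1 : K) ^ (k + 1) * ((n : K) - (k + 1))⁻¹ * n) := by
  have hsub : (n : K) - (k + 1) ≠ 0 := by
    rw [sub_ne_zero]
    exact_mod_cast hk.ne'
  exact isUnit_iff_ne_zero.2 <|
    mul_ne_zero (mul_ne_zero (by simp) (inv_ne_zero hsub)) (Nat.cast_ne_zero.2 (by omega))

namespace GaudinOl

open Polynomial

/-- The monic polynomial of degree `d` with coefficients `x a, …, x (a + d - 1)`, leading
terms first. -/
noncomputable def windowPoly {R : Type*} [Semiring R] {n : ℕ} (x : Fin n → R) (a d : ℕ) : R[X] :=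
  X ^ d + ∑ i : Fin n, if a ≤ (i : ℕ) ∧ (i : ℕ) < a + d then C (x i) * X ^ (d - 1 - (i - a)) else 0

theorem fPoly_eq_windowPoly (n l : ℕ) : fPoly n l = windowPoly MvPolynomial.X 0 l := by
  simp [fPoly, windowPoly]

theorem gPoly_eq_windowPoly (n l : ℕ) : gPoly n l = windowPoly MvPolynomial.X l (n - 1 - l) := by
  unfold gPoly windowPoly
  congr 1
  · rw [Nat.sub_right_comm]
  · refine sum_congr rfl fun i _ => ?_
    refine if_congr (by omega) (by congr 2; omega) rfl

section windowPoly

variable {R S : Type*} [Semiring R] [Semiring S] {n a d : ℕ}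

theorem windowPoly_map (x : Fin n → R) (ψ : R →+* S) :
    (windowPoly x a d).map ψ = windowPoly (ψ ∘ x) a d := by
  simp only [windowPoly, Polynomial.map_add, Polynomial.map_pow, map_X, Polynomial.map_sum]
  congr 1
  refine sum_congr rfl fun i _ => ?_
  split_ifs <;> simp

theorem windowPoly_coeff_eq_of_monic {p : R[X]} (hp : p.Monic) (hd : p.natDegree = d)
    (h : a + d ≤ n) : windowPoly (fun i : Fin n => p.coeff (d - 1 - (i - a))) a d = p := by
  have hsum := Fin.sum_ite_window_eq_sum_range h fun k => C (p.coeff k) * X ^ k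
  rw [windowPoly, hsum, ← hd]
  exact hp.as_sum.symm

theorem map_windowPoly_eq_of_monic (x : Fin n → R) (ψ : R →+* S) {p : S[X]} (hp : p.Monic)
    (hd : p.natDegree = d) (h : a + d ≤ n)
    (hψ : ∀ i : Fin n, a ≤ (i : ℕ) → (i : ℕ) < a + d → ψ (x i) = p.coeff (d - 1 - (i - a))) :
    (windowPoly x a d).map ψ = p := by
  rw [windowPoly_map, ← windowPoly_coeff_eq_of_monic hp hd h, windowPoly, windowPoly]
  congr 1
  refine sum_congr rfl fun i _ => ?_
  split_ifs with hi
  · rw [Function.comp_apply, hψ i hi.1 hi.2]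
  · rfl

end windowPoly

/-- Sends `f` and `g` to `∏_{j < l} (X + z_j)` and `∏_{l ≤ j < l + d} (X + z_j)` and `Σ_n` to a
fresh variable; here `n = l + d + 1` and `z_j = X (some j)`. -/
noncomputable def rootSpecialization (l d : ℕ) :
    MvPolynomial (Fin (l + d + 1)) ℂ →ₐ[ℂ] MvPolynomial (Option (Fin (l + d))) ℂ :=
  MvPolynomial.aeval fun i =>
    if (i : ℕ) < l then
      (∏ j : Fin l, (X + C (MvPolynomial.X (some (Fin.castAdd d j))))).coeff (l - 1 - i)
    else if (i : ℕ) < l + d then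
      (∏ j : Fin d, (X + C (MvPolynomial.X (some (Fin.natAdd l j))))).coeff (d - 1 - (i - l))
    else MvPolynomial.X none

theorem map_fPoly_mul_gPoly (l d : ℕ) :
    (fPoly (l + d + 1) l * gPoly (l + d + 1) l).map
      (rootSpecialization l d :
        MvPolynomial (Fin (l + d + 1)) ℂ →+* MvPolynomial (Option (Fin (l + d))) ℂ) =
      ∏ j : Fin (l + d), (X + C (MvPolynomial.X (some j))) := by
  have hmonic {k : ℕ} (z : Fin k → MvPolynomial (Option (Fin (l + d))) ℂ) :
      (∏ j, (X + C (z j))).Monic := monic_prod_of_monic _ _ fun j _ => monic_X_add_C (z j)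
  have hdeg {k : ℕ} (z : Fin k → MvPolynomial (Option (Fin (l + d))) ℂ) :
      (∏ j, (X + C (z j))).natDegree = k := by
    rw [natDegree_prod_X_add_C, card_univ, Fintype.card_fin]
  rw [Polynomial.map_mul, Fin.prod_univ_add, fPoly_eq_windowPoly, gPoly_eq_windowPoly,
    show l + d + 1 - 1 - l = d by omega]
  congr 1
  · refine map_windowPoly_eq_of_monic _ _ (hmonic _) (hdeg _) (by omega) fun i _ hi => ?_
    rw [zero_add] at hi
    simp [rootSpecialization, hi]
  · refine map_windowPoly_eq_of_monic _ _ (hmonic _) (hdeg _) (by omega) fun i hl hi => ?_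
    simp [rootSpecialization, hi, not_lt.2 hl]

theorem rootSpecialization_sigmaElt_last (l d : ℕ) :
    rootSpecialization l d (SigmaElt (l + d + 1) l (Fin.last _)) = MvPolynomial.X none := by
  simp [SigmaElt, rootSpecialization]

theorem rootSpecialization_sigmaElt_castSucc (l d : ℕ) (j : Fin (l + d)) :
    rootSpecialization l d (SigmaElt (l + d + 1) l j.castSucc) =
      ((-1 : ℂ) ^ ((j : ℕ) + 1) * (((l + d + 1 : ℕ) : ℂ) - ((j : ℕ) + 1))⁻¹ *
        ((l + d + 1 : ℕ) : ℂ)) •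
        MvPolynomial.rename some (MvPolynomial.esymm (Fin (l + d)) ℂ (j + 1)) := by
  have hj : (j.castSucc : ℕ) + 1 ≠ l + d + 1 := by rw [Fin.val_castSucc]; omega
  rw [SigmaElt, if_neg hj, map_smul, coeff_smul, map_smul, smul_smul, Fin.val_castSucc,
    ← AlgHom.coe_toRingHom, ← Polynomial.coeff_map, map_fPoly_mul_gPoly,
    MvPolynomial.coeff_prod_X_add_C_rename some (by rw [Fintype.card_fin]; omega),
    Fintype.card_fin, show l + d - (l + d + 1 - 1 - (j + 1)) = j + 1 by omega]

/-- The elements `Σ₁, ..., Σ_n` are algebraically independent in the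
polynomial ring `O_l = ℂ[f₁,...,f_l, g₁,...,g_{n−l−1}, Σ_n]`; equivalently, the map
`ℂ[z₁,...,z_n]^{S_n} → O_l`, `σ_i(z) ↦ Σ_i`, is injective. -/
theorem sigma_algebraically_independent (n l : ℕ) (hl : l < n) :
    AlgebraicIndependent ℂ (SigmaElt n l) := by
  obtain ⟨d, rfl⟩ : ∃ d, n = l + d + 1 := ⟨n - l - 1, by omega⟩
  have hscaled := (MvPolynomial.algebraicIndependent_esymm ℂ (l + d)).smul_of_isUnit
    fun j => isUnit_neg_one_pow_mul_inv_mul (n := l + d + 1) (k := j) (by omega)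
  have hmodel := hscaled.option_elim_X_rename_some.comp _ finSuccEquivLast.injective
  refine .of_comp (rootSpecialization l d) ?_
  convert hmodel using 1
  funext i
  cases i using Fin.lastCases with
  | last => simp [rootSpecialization_sigmaElt_last]
  | cast j => simp [rootSpecialization_sigmaElt_castSucc]

end GaudinOl
end
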